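/- The topology Z^T on Minkowski space induces on every timelike curve the same subspace topology as the Euclidean topology T_E, and Z^T is the finest topology with this property: if T is any topology on M which induces on every timelike curve the same subspace topology as T_E, then T is coarser than or equal to Z^T. -/

import Mathlib

noncomputable section

open TopologicalSpace Filter

/-- Minkowski space `M = ℝ × ℝ³`. -/
abbrev Mink : Type := ℝ × EuclideanSpace ℝ (Fin 3)

/-- The Euclidean (product) topology on `M`. -/
def TE : TopologicalSpace Mink := inferInstance

/-- Time difference Δt(x,y). -/
def dtime (x y : Mink) : ℝ := y.1 - x.1

/-- Spatial distance Δr(x,y). -/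
def dspace (x y : Mink) : ℝ := ‖y.2 - x.2‖

/-- Chronological order `x ≪ y`. -/
def Chron (x y : Mink) : Prop := dspace x y < dtime x y

/-- Causal order `x ≺ y`. -/
def Causal (x y : Mink) : Prop := dspace x y ≤ dtime x y

/-- Euclidean open ball of radius ε about x. -/
def eball (x : Mink) (ε : ℝ) : Set Mink :=
  {y | Real.sqrt ((y.1 - x.1) ^ 2 + ‖y.2 - x.2‖ ^ 2) < ε}

/-- Time cone `C^T(x)`. -/
def timeCone (x : Mink) : Set Mink := {x} ∪ {y | Chron x y ∨ Chron y x}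

/-- Space cone `C^S(x)`. -/
def spaceCone (x : Mink) : Set Mink := {x} ∪ {y | |dtime x y| < dspace x y}

/-- Light cone `C^L(x)`. -/
def lightCone (x : Mink) : Set Mink := {y | y ≠ x ∧ |dtime x y| = dspace x y}

/-- Causal cone `C^J(x)`. -/
def causalCone (x : Mink) : Set Mink := {x} ∪ {y | Causal x y ∨ Causal y x}

/-- Closed space cone `K^S(x)` (space cone together with the light cone). -/
def closedSpaceCone (x : Mink) : Set Mink := {x} ∪ {y | |dtime x y| ≤ dspace x y}

/-- Bounded time cones, the defining family of `Z^T`. -/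
def BasisT : Set (Set Mink) := {S | ∃ x ε, 0 < ε ∧ S = timeCone x ∩ eball x ε}

/-- Bounded space cones, the defining family of `Z^S`. -/
def BasisS : Set (Set Mink) := {S | ∃ x ε, 0 < ε ∧ S = spaceCone x ∩ eball x ε}

/-- Balls with the light cone of the centre removed, the defining family of `Z`. -/
def BasisZ : Set (Set Mink) := {S | ∃ x ε, 0 < ε ∧ S = eball x ε \ lightCone x}

/-- Zeeman's topology `Z^T` (the Minkowski analogue of the path topology). -/
def ZT : TopologicalSpace Mink := TopologicalSpace.generateFrom BasisT

/-- The topology `Z^S`. -/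
def ZS : TopologicalSpace Mink := TopologicalSpace.generateFrom BasisS

/-- The topology `Z`. -/
def Ztop : TopologicalSpace Mink := TopologicalSpace.generateFrom BasisZ

def Jplus (x : Mink) : Set Mink := {y | Causal x y}
def Jminus (x : Mink) : Set Mink := {y | Causal y x}
def Nplus (x : Mink) : Set Mink := {y | y ≠ x ∧ dtime x y = dspace x y}
def Nminus (x : Mink) : Set Mink := {y | y ≠ x ∧ -dtime x y = dspace x y}

/-- The interval topology `T^tc` whose subbasic open sets are time cones. -/
def Ttc : TopologicalSpace Mink :=
  TopologicalSpace.generateFrom {S | ∃ x, S = timeCone x}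

/-- The interval topology `T^≪` of the irreflexive causal order. -/
def Tll : TopologicalSpace Mink :=
  TopologicalSpace.generateFrom
    ({S | ∃ x, S = Set.univ \ (Jplus x \ {x})} ∪ {S | ∃ x, S = Set.univ \ (Jminus x \ {x})})

/-- The interval topology `T^→` of irreflexive horismos. -/
def Thor : TopologicalSpace Mink :=
  TopologicalSpace.generateFrom
    ({S | ∃ x, S = Set.univ \ Nplus x} ∪ {S | ∃ x, S = Set.univ \ Nminus x})

/-- The topology `(Z^T)′` generated by bounded causal cones. -/
def ZT' : TopologicalSpace Mink :=
  TopologicalSpace.generateFrom {S | ∃ x ε, 0 < ε ∧ S = causalCone x ∩ eball x ε}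

/-- The topology `(Z^S)′` generated by bounded closed space cones. -/
def ZS' : TopologicalSpace Mink :=
  TopologicalSpace.generateFrom {S | ∃ x ε, 0 < ε ∧ S = closedSpaceCone x ∩ eball x ε}

/-- The topology `(T^tc)′` generated by causal cones. -/
def Ttc' : TopologicalSpace Mink :=
  TopologicalSpace.generateFrom {S | ∃ x, S = causalCone x}

/-- The topology `(T^≪)′` generated by closed space cones. -/
def Tll' : TopologicalSpace Mink :=
  TopologicalSpace.generateFrom {S | ∃ x, S = closedSpaceCone x}

/-- An endless causal curve. -/
def EndlessCausalCurve (γ : ℝ → Mink) : Prop :=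
  Continuous γ ∧ (∀ s t : ℝ, s < t → Causal (γ s) (γ t) ∧ γ s ≠ γ t) ∧
    (∀ c : ℝ, ∃ t, c < (γ t).1) ∧ (∀ c : ℝ, ∃ t, (γ t).1 < c)

/-- `γ` is a `T`-limit curve of the sequence `γs` of curves. -/
def IsLimitCurve (T : TopologicalSpace Mink) (γ : ℝ → Mink) (γs : ℕ → ℝ → Mink) : Prop :=
  ∃ nk : ℕ → ℕ, StrictMono nk ∧
    ∀ p ∈ Set.range γ, ∃ pk : ℕ → Mink,
      (∀ k, pk k ∈ Set.range (γs (nk k))) ∧ Filter.Tendsto pk Filter.atTop (@nhds Mink T p)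

/-- A timelike curve: the range of a continuous map from a nondegenerate real interval
into `(M, T_E)` which is strictly `≪`-preserving. -/
def IsTimelikeCurve (C : Set Mink) : Prop :=
  ∃ (s : Set ℝ) (γ : ℝ → Mink), s.OrdConnected ∧ s.Nontrivial ∧ ContinuousOn γ s ∧
    (∀ a ∈ s, ∀ b ∈ s, a < b → Chron (γ a) (γ b)) ∧ C = γ '' s


/-!
On a timelike curve through `x` every point lies in the time cone of `x`, so `Z^T` and `T_E`
induce the same topology on it. Conversely, if a `T`-open set `U ∋ x` contained no bounded time
cone at `x`, there would be points `yₙ ∉ U` of the time cone of `x` converging to `x`. Infinitely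
many of them lie on one side of `x`, say in its future, and since the past of each `yₙ` is a
Euclidean neighbourhood of `x`, a subsequence is a chain `y_{n_{k+1}} ≪ y_{n_k}`. The polygonal
path through this chain, closed up by `x`, is a timelike curve on which `U` is not a
neighbourhood of `x`.
-/

open Topology Set

section PolygonalPath

variable {E : Type*} [AddCommGroup E] [Module ℝ E]

def polygonalPath (z : ℕ → E) (t : ℝ) : E :=
  AffineMap.lineMap (z ⌊t⌋₊) (z (⌊t⌋₊ + 1)) (t - ⌊t⌋₊)

theorem polygonalPath_natCast (z : ℕ → E) (n : ℕ) : polygonalPath z n = z n := by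
  simp [polygonalPath]

theorem polygonalPath_eqOn_Icc (z : ℕ → E) (n : ℕ) :
    EqOn (polygonalPath z) (fun t => AffineMap.lineMap (z n) (z (n + 1)) (t - n))
      (Icc (n : ℝ) (n + 1)) := by
  rintro t ⟨hnt, htn⟩
  rcases htn.lt_or_eq with htn | rfl
  · have : ⌊t⌋₊ = n := (Nat.floor_eq_iff ((n.cast_nonneg).trans hnt)).2 ⟨hnt, htn⟩
    simp [polygonalPath, this]
  · simpa using polygonalPath_natCast z (n + 1)

theorem polygonalPath_eqOn_Iic (z : ℕ → E) :
    EqOn (polygonalPath z) (AffineMap.lineMap (z 0) (z 1)) (Iic 0) := by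
  intro t ht
  simp [polygonalPath, Nat.floor_of_nonpos (show t ≤ 0 from ht)]

variable [TopologicalSpace E]

theorem tendsto_polygonalPath [LocallyConvexSpace ℝ E] {z : ℕ → E} {x : E}
    (hz : Tendsto z atTop (𝓝 x)) : Tendsto (polygonalPath z) atTop (𝓝 x) := by
  refine (LocallyConvexSpace.convex_basis (𝕜 := ℝ) x).tendsto_right_iff.2 fun V ⟨hV, hVc⟩ => ?_
  obtain ⟨N, hN⟩ := eventually_atTop.1 (hz hV)
  filter_upwards [eventually_ge_atTop (N : ℝ)] with t ht
  have hNt : N ≤ ⌊t⌋₊ := Nat.le_floor ht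
  exact hVc.lineMap_mem (hN _ hNt) (hN _ (by omega))
    ⟨sub_nonneg.2 (Nat.floor_le (N.cast_nonneg.trans ht)), by linarith [Nat.lt_floor_add_one t]⟩

variable [IsTopologicalAddGroup E] [ContinuousSMul ℝ E]

theorem continuous_polygonalPath (z : ℕ → E) : Continuous (polygonalPath z) := by
  have hfin : LocallyFinite fun n : ℤ => Icc (n : ℝ) (n + 1) :=
    locallyFinite_Icc_of_tendsto tendsto_intCast_atTop_atTop
      (tendsto_atBot_add_const_right _ 1 (tendsto_intCast_atBot_iff.2 tendsto_id))
  refine hfin.continuous (iUnion_Icc_intCast ℝ) (fun _ => isClosed_Icc) fun n => ?_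
  rcases le_or_gt 0 n with hn | hn
  · lift n to ℕ using hn
    refine ((AffineMap.lineMap_continuous (p := z n) (q := z (n + 1))).comp
      (continuous_sub_right (n : ℝ))).continuousOn.congr ?_
    simpa [Function.comp_def] using polygonalPath_eqOn_Icc z n
  · refine (AffineMap.lineMap_continuous (p := z 0) (q := z 1)).continuousOn.congr
      fun t ht => polygonalPath_eqOn_Iic z (ht.2.trans ?_)
    exact_mod_cast hn

end PolygonalPath

theorem exists_strictMono_chain_of_eventually {P : ℕ → ℕ → Prop}
    (h : ∀ m, ∀ᶠ n in atTop, P m n) : ∃ φ : ℕ → ℕ, StrictMono φ ∧ ∀ k, P (φ k) (φ (k + 1)) := by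
  choose N hN using fun m => eventually_atTop.1 (h m)
  let φ : ℕ → ℕ := fun k => Nat.rec 0 (fun _ m => max (m + 1) (N m)) k
  exact ⟨φ, strictMono_nat_of_lt_succ fun k => (Nat.lt_succ_self _).trans_le (le_max_left _ _),
    fun k => hN _ _ (le_max_right _ _)⟩

theorem Chron.trans {x y z : Mink} (hxy : Chron x y) (hyz : Chron y z) : Chron x z := by
  unfold Chron dspace dtime at *
  calc ‖z.2 - x.2‖ ≤ ‖z.2 - y.2‖ + ‖y.2 - x.2‖ := norm_sub_le_norm_sub_add_norm_sub _ _ _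
    _ < (z.1 - y.1) + (y.1 - x.1) := add_lt_add hyz hxy
    _ = z.1 - x.1 := sub_add_sub_cancel _ _ _

theorem isOpen_setOf_chron_left (x : Mink) : IsOpen {y | Chron x y} := by
  unfold Chron dspace dtime
  exact isOpen_lt (by fun_prop) (by fun_prop)

theorem isOpen_setOf_chron_right (x : Mink) : IsOpen {y | Chron y x} := by
  unfold Chron dspace dtime
  exact isOpen_lt (by fun_prop) (by fun_prop)

theorem Chron.lineMap {p q : Mink} (h : Chron p q) {u v : ℝ} (huv : u < v) :
    Chron (AffineMap.lineMap p q u) (AffineMap.lineMap p q v) := by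
  have hsub : AffineMap.lineMap p q v - AffineMap.lineMap p q u = (v - u) • (q - p) := by
    simp only [AffineMap.lineMap_apply_module]
    module
  unfold Chron dspace dtime at *
  rw [← Prod.snd_sub, ← Prod.fst_sub, hsub, Prod.smul_snd, Prod.smul_fst, norm_smul,
    Real.norm_of_nonneg (sub_nonneg.2 huv.le), smul_eq_mul]
  exact mul_lt_mul_of_pos_left h (sub_pos.2 huv)

section Chain

variable {z : ℕ → Mink}

theorem chron_polygonalPath_of_mem_Icc (hz : ∀ n, Chron (z (n + 1)) (z n)) (n : ℕ) {s t : ℝ}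
    (hs : s ∈ Icc (n : ℝ) (n + 1)) (ht : t ∈ Icc (n : ℝ) (n + 1)) (hst : s < t) :
    Chron (polygonalPath z t) (polygonalPath z s) := by
  rw [polygonalPath_eqOn_Icc z n hs, polygonalPath_eqOn_Icc z n ht]
  dsimp only
  rw [← AffineMap.lineMap_apply_one_sub (z (n + 1)),
    ← AffineMap.lineMap_apply_one_sub (z (n + 1))]
  exact (hz n).lineMap (by linarith)

theorem chron_polygonalPath (hz : ∀ n, Chron (z (n + 1)) (z n)) {s t : ℝ} (hs : 0 ≤ s)
    (hst : s < t) : Chron (polygonalPath z t) (polygonalPath z s) := by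
  suffices key : ∀ N : ℕ, ∀ s ∈ Icc (0 : ℝ) N, ∀ t ∈ Icc (0 : ℝ) N, s < t →
      Chron (polygonalPath z t) (polygonalPath z s) from
    key ⌈t⌉₊ s ⟨hs, (hst.trans_le (Nat.le_ceil t)).le⟩ t ⟨hs.trans hst.le, Nat.le_ceil t⟩ hst
  intro N
  induction N with
  | zero =>
    rintro s ⟨hs0, hs⟩ t ⟨-, ht⟩ hst
    norm_num at hs ht
    linarith
  | succ N ih =>
    rintro s ⟨hs0, hs⟩ t ⟨ht0, ht⟩ hst
    push_cast at hs ht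
    by_cases htN : t ≤ N
    · exact ih s ⟨hs0, hst.le.trans htN⟩ t ⟨ht0, htN⟩ hst
    by_cases hsN : (N : ℝ) ≤ s
    · exact chron_polygonalPath_of_mem_Icc hz N ⟨hsN, hs⟩ ⟨hsN.trans hst.le, ht⟩ hst
    rw [not_le] at htN hsN
    exact (chron_polygonalPath_of_mem_Icc hz N ⟨le_rfl, by linarith⟩ ⟨htN.le, ht⟩ htN).trans
      (ih s ⟨hs0, hsN.le⟩ N ⟨N.cast_nonneg, le_rfl⟩ hsN)

theorem chron_polygonalPath_of_forall_chron (hz : ∀ n, Chron (z (n + 1)) (z n)) {x : Mink}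
    (hxz : ∀ n, Chron x (z n)) {t : ℝ} (ht : 0 ≤ t) : Chron x (polygonalPath z t) := by
  have h := chron_polygonalPath hz ht (Nat.lt_floor_add_one t)
  rw [← Nat.cast_add_one, polygonalPath_natCast] at h
  exact (hxz _).trans h

theorem exists_isTimelikeCurve_of_chain (hz : ∀ n, Chron (z (n + 1)) (z n)) {x : Mink}
    (hxz : ∀ n, Chron x (z n)) (hlim : Tendsto z atTop (𝓝 x)) :
    ∃ C, IsTimelikeCurve C ∧ x ∈ C ∧ ∀ n, z n ∈ C := by
  -- `s ↦ s⁻¹ - 1` maps `(0, 1]` decreasingly onto `[0, ∞)`, so `γ` climbs the chain from `x`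
  set γ := Function.update (fun s : ℝ => polygonalPath z (s⁻¹ - 1)) 0 x
  have hγ0 : γ 0 = x := Function.update_self _ _ _
  have hγ : ∀ s ≠ 0, γ s = polygonalPath z (s⁻¹ - 1) := fun s hs => Function.update_of_ne hs _ _
  have hcont : ContinuousOn γ (Icc 0 1) := by
    refine continuousOn_update_iff.2 ⟨?_, fun _ => ?_⟩
    · exact (continuous_polygonalPath z).comp_continuousOn
        ((continuousOn_inv₀.mono fun s hs => hs.2).sub continuousOn_const)
    · refine (tendsto_polygonalPath hlim).comp <|
        (tendsto_inv_nhdsGT_zero.atTop_add tendsto_const_nhds).mono_left (nhdsWithin_mono _ ?_)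
      exact fun s hs => lt_of_le_of_ne hs.1.1 (Ne.symm hs.2)
  have hchron : ∀ a ∈ Icc (0 : ℝ) 1, ∀ b ∈ Icc (0 : ℝ) 1, a < b → Chron (γ a) (γ b) := by
    intro a ha b hb hab
    have hb0 : 0 < b := ha.1.trans_lt hab
    have hτ : 0 ≤ b⁻¹ - 1 := sub_nonneg.2 ((one_le_inv₀ hb0).2 hb.2)
    rw [hγ b hb0.ne']
    rcases ha.1.eq_or_lt with rfl | ha0
    · exact hγ0 ▸ chron_polygonalPath_of_forall_chron hz hxz hτ
    · rw [hγ a ha0.ne']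
      exact chron_polygonalPath hz hτ (sub_lt_sub_right ((inv_lt_inv₀ hb0 ha0).2 hab) 1)
  have hnt : (Icc (0 : ℝ) 1).Nontrivial :=
    nontrivial_of_lt (left_mem_Icc.2 zero_le_one) (right_mem_Icc.2 zero_le_one) zero_lt_one
  refine ⟨γ '' Icc 0 1, ⟨Icc 0 1, γ, ordConnected_Icc, hnt, hcont, hchron, rfl⟩,
    ⟨0, left_mem_Icc.2 zero_le_one, hγ0⟩, fun n => ?_⟩
  refine ⟨((n : ℝ) + 1)⁻¹, ⟨by positivity, inv_le_one_of_one_le₀ (by simp)⟩, ?_⟩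
  rw [hγ _ (by positivity), inv_inv, add_sub_cancel_right, polygonalPath_natCast]

end Chain

def timeReflect (p : Mink) : Mink := (-p.1, p.2)

theorem timeReflect_timeReflect (p : Mink) : timeReflect (timeReflect p) = p := by
  simp [timeReflect]

theorem continuous_timeReflect : Continuous timeReflect := by
  unfold timeReflect
  fun_prop

theorem chron_timeReflect {x y : Mink} : Chron (timeReflect x) (timeReflect y) ↔ Chron y x := by
  simp only [Chron, dspace, dtime, timeReflect, norm_sub_rev y.2]
  constructor <;> intro h <;> linarith

theorem IsTimelikeCurve.image_timeReflect {C : Set Mink} (hC : IsTimelikeCurve C) :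
    IsTimelikeCurve (timeReflect '' C) := by
  obtain ⟨s, γ, hs, hnt, hγ, hchron, rfl⟩ := hC
  refine ⟨Neg.neg ⁻¹' s, timeReflect ∘ γ ∘ Neg.neg, ?_, hnt.preimage neg_surjective,
    continuous_timeReflect.comp_continuousOn (hγ.comp continuousOn_neg fun _ h => h),
    fun a ha b hb hab => chron_timeReflect.2 (hchron _ hb _ ha (neg_lt_neg hab)), ?_⟩
  · exact ⟨fun a ha b hb t ht => hs.out hb ha ⟨neg_le_neg ht.2, neg_le_neg ht.1⟩⟩
  · rw [image_comp, image_comp, image_preimage_eq s neg_surjective]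

theorem exists_isTimelikeCurve_frequently_mem_of_chron {x : Mink} {y : ℕ → Mink}
    (hy : Tendsto y atTop (𝓝 x)) (hxy : ∃ᶠ n in atTop, Chron x (y n)) :
    ∃ C, IsTimelikeCurve C ∧ x ∈ C ∧ ∃ᶠ n in atTop, y n ∈ C := by
  obtain ⟨φ, hφ, hxφ⟩ := extraction_of_frequently_atTop hxy
  have hyφ : Tendsto (y ∘ φ) atTop (𝓝 x) := hy.comp hφ.tendsto_atTop
  obtain ⟨ψ, hψ, hchain⟩ := exists_strictMono_chain_of_eventually fun m =>
    hyφ.eventually ((isOpen_setOf_chron_right (y (φ m))).mem_nhds (hxφ m))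
  obtain ⟨C, hC, hxC, hyC⟩ := exists_isTimelikeCurve_of_chain (z := fun k => y (φ (ψ k)))
    hchain (fun k => hxφ (ψ k)) (hyφ.comp hψ.tendsto_atTop)
  exact ⟨C, hC, hxC, (hφ.comp hψ).tendsto_atTop.frequently (Frequently.of_forall hyC)⟩

theorem exists_isTimelikeCurve_frequently_mem {x : Mink} {y : ℕ → Mink}
    (hy : Tendsto y atTop (𝓝 x)) (hxy : ∃ᶠ n in atTop, Chron x (y n) ∨ Chron (y n) x) :
    ∃ C, IsTimelikeCurve C ∧ x ∈ C ∧ ∃ᶠ n in atTop, y n ∈ C := by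
  rcases frequently_or_distrib.1 hxy with hfuture | hpast
  · exact exists_isTimelikeCurve_frequently_mem_of_chron hy hfuture
  obtain ⟨C, hC, hxC, hyC⟩ := exists_isTimelikeCurve_frequently_mem_of_chron
    ((continuous_timeReflect.tendsto x).comp hy) (hpast.mono fun n h => chron_timeReflect.2 h)
  exact ⟨timeReflect '' C, hC.image_timeReflect, ⟨_, hxC, timeReflect_timeReflect x⟩,
    hyC.mono fun n h => ⟨_, h, timeReflect_timeReflect (y n)⟩⟩

theorem IsTimelikeCurve.subset_timeCone {C : Set Mink} (hC : IsTimelikeCurve C) {x : Mink}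
    (hx : x ∈ C) : C ⊆ timeCone x := by
  obtain ⟨s, γ, -, -, -, hchron, rfl⟩ := hC
  obtain ⟨a, ha, rfl⟩ := hx
  rintro _ ⟨b, hb, rfl⟩
  rcases lt_trichotomy a b with h | rfl | h
  · exact Or.inr (Or.inl (hchron a ha b hb h))
  · exact Or.inl rfl
  · exact Or.inr (Or.inr (hchron b hb a ha h))

theorem isOpen_eball (x : Mink) (ε : ℝ) : IsOpen (eball x ε) :=
  isOpen_lt (by fun_prop) continuous_const

theorem eball_subset_ball (x : Mink) (ε : ℝ) : eball x ε ⊆ Metric.ball x ε := by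
  intro y hy
  rw [eball, mem_ofPred_eq] at hy
  refine lt_of_le_of_lt ?_ hy
  rw [Prod.dist_eq, Real.dist_eq, dist_eq_norm]
  refine max_le (Real.abs_le_sqrt (le_add_of_nonneg_right (by positivity))) ?_
  simpa using
    Real.abs_le_sqrt (le_add_of_nonneg_left (a := ‖y.2 - x.2‖ ^ 2) (sq_nonneg (y.1 - x.1)))

theorem isOpen_ZT_of_mem_nhdsWithin {U : Set Mink} (hU : ∀ x ∈ U, U ∈ 𝓝[timeCone x] x) :
    IsOpen[ZT] U := by
  refine (@isOpen_iff_forall_mem_open _ ZT _).2 fun x hx => ?_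
  obtain ⟨ε, hε, hεU⟩ := Metric.mem_nhdsWithin_iff.1 (hU x hx)
  exact ⟨timeCone x ∩ eball x ε, fun y hy => hεU ⟨eball_subset_ball x ε hy.2, hy.1⟩,
    GenerateOpen.basic _ ⟨x, ε, hε, rfl⟩, Or.inl rfl, by simpa [eball] using hε⟩

theorem ZT_le_TE : ZT ≤ TE := fun _ hU =>
  isOpen_ZT_of_mem_nhdsWithin fun _ hx => mem_nhdsWithin_of_mem_nhds (hU.mem_nhds hx)

theorem IsTimelikeCurve.induced_ZT_eq {C : Set Mink} (hC : IsTimelikeCurve C) :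
    induced ((↑) : C → Mink) ZT = induced (↑) TE := by
  refine le_antisymm (induced_mono ZT_le_TE) ?_
  rw [ZT, induced_generateFrom_eq]
  refine le_generateFrom ?_
  rintro _ ⟨_, ⟨x, ε, -, rfl⟩, rfl⟩
  by_cases hxC : x ∈ C
  · refine ⟨eball x ε, isOpen_eball x ε, ?_⟩
    ext p
    simp [hC.subset_timeCone hxC p.2]
  · refine ⟨{y | Chron x y ∨ Chron y x} ∩ eball x ε,
      ((isOpen_setOf_chron_left x).union (isOpen_setOf_chron_right x)).inter (isOpen_eball x ε),
      ?_⟩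
    ext p
    simp [timeCone, ne_of_mem_of_not_mem p.2 hxC]

theorem isOpen_ZT_of_forall_isTimelikeCurve {U : Set Mink}
    (hU : ∀ C : Set Mink, IsTimelikeCurve C → IsOpen ((↑) ⁻¹' U : Set C)) : IsOpen[ZT] U := by
  refine isOpen_ZT_of_mem_nhdsWithin fun x hxU => ?_
  by_contra hU'
  obtain ⟨y, hy, hyU⟩ := exists_seq_forall_of_frequently (not_eventually.1 hU')
  obtain ⟨hyx, hy_cone⟩ := tendsto_nhdsWithin_iff.1 hy
  have hcone : ∃ᶠ n in atTop, Chron x (y n) ∨ Chron (y n) x :=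
    (hy_cone.mono fun n hn => Or.resolve_left hn fun h => hyU n (h ▸ hxU)).frequently
  obtain ⟨C, hC, hxC, hyC⟩ := exists_isTimelikeCurve_frequently_mem hyx hcone
  have hUC : U ∈ 𝓝[C] x := mem_of_superset
    (mem_nhds_subtype_iff_nhdsWithin.1 ((hU C hC).mem_nhds (x := ⟨x, hxC⟩) hxU))
    (image_preimage_subset _ _)
  obtain ⟨n, hnC, hnU⟩ :=
    (hyC.and_eventually (hyx.eventually (eventually_nhdsWithin_iff.1 hUC))).exists
  exact hyU n (hnU hnC)

theorem ZT_le_of_forall_isTimelikeCurve {T : TopologicalSpace Mink}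
    (hT : ∀ C : Set Mink, IsTimelikeCurve C → induced ((↑) : C → Mink) T = induced (↑) TE) :
    ZT ≤ T := fun U hU => isOpen_ZT_of_forall_isTimelikeCurve fun C hC =>
  (hT C hC ▸ isOpen_induced hU : IsOpen[induced ((↑) : C → Mink) TE] ((↑) ⁻¹' U))

/-- `Z^T` induces on every timelike curve the Euclidean subspace topology, and it is the
finest topology with this property (any other such topology is coarser or equal,
i.e. `≥` in Mathlib's order on topologies). -/
theorem ZT_finest_for_timelike_curves :
    (∀ C : Set Mink, IsTimelikeCurve C →
      TopologicalSpace.induced (Subtype.val : C → Mink) ZT =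
        TopologicalSpace.induced (Subtype.val : C → Mink) TE) ∧
    ∀ T : TopologicalSpace Mink,
      (∀ C : Set Mink, IsTimelikeCurve C →
        TopologicalSpace.induced (Subtype.val : C → Mink) T =
          TopologicalSpace.induced (Subtype.val : C → Mink) TE) →
      ZT ≤ T :=
  ⟨fun _ hC => hC.induced_ZT_eq, fun _ hT => ZT_le_of_forall_isTimelikeCurve hT⟩
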